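/- Let (Q,I) be a special biserial bound quiver, u - λv a binomial relation with u = ap where a is a simple cycle at the source x of u. Then the 'cycle' b occurring in the conclusion cannot be stationary; i.e., there is no binomial relation of the form ap - λp in I with a a nontrivial cycle and p a path. -/

import Mathlib

open Classical

noncomputable section

/-- A finite quiver: finite sets of vertices and arrows with source and target maps. -/
structure FQuiver where
  V : Type
  A : Type
  [fintV : Fintype V]
  [decV : DecidableEq V]
  [fintA : Fintype A]
  [decA : DecidableEq A]
  src : A → V
  tgt : A → V

attribute [instance] FQuiver.fintV FQuiver.decV FQuiver.fintA FQuiver.decA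

namespace FQuiver

variable {Q : FQuiver}

/-- Oriented paths in a quiver. -/
inductive Path (Q : FQuiver) : Q.V → Q.V → Type
  | nil (v : Q.V) : Path Q v v
  | cons (a : Q.A) {w : Q.V} (p : Path Q (Q.tgt a) w) : Path Q (Q.src a) w

/-- Composition (concatenation) of paths. -/
def Path.comp : ∀ {u v w : Q.V}, Path Q u v → Path Q v w → Path Q u w
  | _, _, _, .nil _, q => q
  | _, _, _, .cons a p, q => .cons a (Path.comp p q)

/-- Length of a path. -/
def Path.length : ∀ {u v : Q.V}, Path Q u v → ℕ
  | _, _, .nil _ => 0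
  | _, _, .cons _ p => Path.length p + 1

/-- The list of arrows of a path, in order. -/
def Path.arrows : ∀ {u v : Q.V}, Path Q u v → List Q.A
  | _, _, .nil _ => []
  | _, _, .cons a p => a :: Path.arrows p

/-- An arrow regarded as a path of length one. -/
def arrow (Q : FQuiver) (a : Q.A) : Path Q (Q.src a) (Q.tgt a) := .cons a (.nil _)

/-- Power of an oriented cycle. -/
def Path.pow {x : Q.V} (c : Path Q x x) : ℕ → Path Q x x
  | 0 => .nil x
  | n + 1 => c.comp (Path.pow c n)

/-- Transport a path along equalities of its endpoints. -/
def Path.cast {u u' v v' : Q.V} (hu : u = u') (hv : v = v') (p : Path Q u v) :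
    Path Q u' v' := by subst hu; subst hv; exact p

/-- The length-two path `ab` formed by two composable arrows. -/
def comp2 (a b : Q.A) (h : Q.src b = Q.tgt a) : Path Q (Q.src a) (Q.tgt b) :=
  (arrow Q a).comp ((arrow Q b).cast h rfl)

/-- The set of all paths of a quiver, bundled with their endpoints. -/
def PathsSigma (Q : FQuiver) : Type := Σ (u : Q.V) (v : Q.V), Path Q u v

/-- The underlying vector space of the path algebra `kQ`: the free `k`-module on paths. -/
abbrev PAlg (k : Type) [Field k] (Q : FQuiver) : Type := PathsSigma Q →₀ k

/-- The basis vector of `kQ` corresponding to a path. -/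
def pvec (k : Type) [Field k] {u v : Q.V} (p : Path Q u v) : PAlg k Q :=
  Finsupp.single ⟨u, v, p⟩ 1

/-- Left multiplication of an element of `kQ` by a path. -/
def lmul (k : Type) [Field k] {u v : Q.V} (p : Path Q u v) (x : PAlg k Q) : PAlg k Q :=
  x.sum fun s c => if h : s.1 = v then c • pvec k (p.comp ((Sigma.snd (Sigma.snd s)).cast h rfl)) else 0

/-- Right multiplication of an element of `kQ` by a path. -/
def rmul (k : Type) [Field k] {u v : Q.V} (x : PAlg k Q) (p : Path Q u v) : PAlg k Q :=
  x.sum fun s c => if h : s.2.1 = u then c • pvec k (Path.comp ((Sigma.snd (Sigma.snd s)).cast rfl h) p) else 0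

/-- The two-sided ideal of `kQ` generated by a set of elements. -/
def idealGen (k : Type) [Field k] (Q : FQuiver) (s : Set (PAlg k Q)) : Submodule k (PAlg k Q) :=
  sInf {M : Submodule k (PAlg k Q) |
    s ⊆ (M : Set (PAlg k Q)) ∧
    ∀ (u v : Q.V) (p : Path Q u v) (x : PAlg k Q), x ∈ M → lmul k p x ∈ M ∧ rmul k x p ∈ M}

/-- An admissible (two-sided) ideal `(kQ⁺)ᵐ ⊆ I ⊆ (kQ⁺)²` of the path algebra. -/
structure AdmissibleIdeal (k : Type) [Field k] (Q : FQuiver) where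
  I : Submodule k (PAlg k Q)
  lmul_mem : ∀ {u v : Q.V} (p : Path Q u v) {x : PAlg k Q}, x ∈ I → lmul k p x ∈ I
  rmul_mem : ∀ {u v : Q.V} (p : Path Q u v) {x : PAlg k Q}, x ∈ I → rmul k x p ∈ I
  bound : ℕ
  two_le_bound : 2 ≤ bound
  pow_le : ∀ {u v : Q.V} (p : Path Q u v), bound ≤ p.length → pvec k p ∈ I
  le_sq : ∀ x ∈ I, ∀ s ∈ x.support, 2 ≤ (Sigma.snd (Sigma.snd s)).length

/-- A special biserial bound quiver `(Q, I)`. -/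
structure SpecialBiserial (k : Type) [Field k] (Q : FQuiver) extends AdmissibleIdeal k Q where
  src_card : ∀ v : Q.V, Fintype.card {a : Q.A // Q.src a = v} ≤ 2
  tgt_card : ∀ v : Q.V, Fintype.card {a : Q.A // Q.tgt a = v} ≤ 2
  unique_succ : ∀ (a b c : Q.A) (hb : Q.src b = Q.tgt a) (hc : Q.src c = Q.tgt a),
      pvec k (comp2 a b hb) ∉ I → pvec k (comp2 a c hc) ∉ I → b = c
  unique_pred : ∀ (a b c : Q.A) (hb : Q.tgt b = Q.src a) (hc : Q.tgt c = Q.src a),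
      pvec k (comp2 b a hb.symm) ∉ I → pvec k (comp2 c a hc.symm) ∉ I → b = c

/-- A binomial relation `u - λv ∈ I` between distinct parallel paths not in `I`. -/
structure BinRel {k : Type} [Field k] {Q : FQuiver} (J : AdmissibleIdeal k Q) where
  s : Q.V
  t : Q.V
  u : Path Q s t
  v : Path Q s t
  coef : k
  coef_ne : coef ≠ 0
  u_ne_v : u ≠ v
  u_not_mem : pvec k u ∉ J.I
  v_not_mem : pvec k v ∉ J.I
  rel_mem : pvec k u - coef • pvec k v ∈ J.I

/-- `I` is generated by a set of paths (monomial relations) together with the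
binomial relations in `R`. -/
def Generates {k : Type} [Field k] {Q : FQuiver} (J : AdmissibleIdeal k Q)
    (R : Set (BinRel J)) : Prop :=
  ∃ P : Set (PathsSigma Q),
    (∀ s ∈ P, pvec k (Sigma.snd (Sigma.snd s)) ∈ J.I) ∧
    J.I = idealGen k Q
      (((fun s : PathsSigma Q => pvec k (Sigma.snd (Sigma.snd s))) '' P) ∪
       ((fun r : BinRel J => pvec k r.u - r.coef • pvec k r.v) '' R))

/-- The ideal `S ⊆ A = kQ/I`: the span of the residue classes of the paths occurring
in the binomial relations of `R`. -/
def Smod {k : Type} [Field k] {Q : FQuiver} (J : AdmissibleIdeal k Q) (R : Set (BinRel J)) :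
    Submodule k (PAlg k Q ⧸ J.I) :=
  Submodule.span k
    ((fun r : BinRel J => (Submodule.Quotient.mk (pvec k r.u) : PAlg k Q ⧸ J.I)) '' R)

/-- Number of connected components of the underlying graph of `Q`. -/
def numComponents (Q : FQuiver) : ℕ :=
  Nat.card (Quot (fun u v : Q.V => ∃ a : Q.A, Q.src a = u ∧ Q.tgt a = v))

/-- A quiver is acyclic (triangular) if it has no nontrivial oriented cycle. -/
def Acyclic (Q : FQuiver) : Prop := ∀ (x : Q.V) (p : Path Q x x), p.length = 0

/-- A simple cycle: a nontrivial oriented cycle visiting no vertex twice. -/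
def IsSimpleCycle {x : Q.V} (p : Path Q x x) : Prop :=
  p.length ≠ 0 ∧ (p.arrows.map Q.src).Nodup

/-- `dim_k S = χ(Q)`, written additively: `dim S + |Q₀| = |Q₁| + N`. -/
def EulerEq {k : Type} [Field k] {Q : FQuiver} (J : AdmissibleIdeal k Q)
    (R : Set (BinRel J)) : Prop :=
  Module.finrank k ↥(Smod J R) + Fintype.card Q.V = Fintype.card Q.A + numComponents Q

/-- The word in the free group on the arrows determined by a path. -/
def pathWord (Q : FQuiver) {u v : Q.V} (p : Path Q u v) : FreeGroup Q.A :=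
  (p.arrows.map FreeGroup.of).prod

/-- `T` is a spanning tree of (the underlying graph of) `Q`. -/
def IsSpanningTree (Q : FQuiver) (T : Set Q.A) : Prop :=
  (∀ u v : Q.V,
      Quot.mk (fun a b : Q.V => ∃ e ∈ T, Q.src e = a ∧ Q.tgt e = b) u =
      Quot.mk (fun a b : Q.V => ∃ e ∈ T, Q.src e = a ∧ Q.tgt e = b) v) ∧
  Nat.card T + 1 = Fintype.card Q.V

/-- The fundamental group of the bound quiver `(Q, I)` (for connected `Q`,
with respect to a spanning tree `T`): the free group on the arrows modulo the
tree arrows and the homotopy relations coming from the binomial relations. -/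
abbrev pi1 {k : Type} [Field k] {Q : FQuiver} (J : AdmissibleIdeal k Q)
    (T : Set Q.A) (R : Set (BinRel J)) : Type :=
  FreeGroup Q.A ⧸ Subgroup.normalClosure
    ((FreeGroup.of '' T) ∪
     ((fun r : BinRel J => pathWord Q r.u * (pathWord Q r.v)⁻¹) '' R))

end FQuiver


namespace FQuiver

section

variable {k : Type} [Field k] {Q : FQuiver}

theorem Path.comp_assoc : ∀ {a b c d : Q.V} (p : Path Q a b) (q : Path Q b c) (r : Path Q c d),
    (p.comp q).comp r = p.comp (q.comp r)
  | _, _, _, _, .nil _, _, _ => rfl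
  | _, _, _, _, .cons e p, q, r => congrArg (Path.cons e) (Path.comp_assoc p q r)

theorem Path.length_comp : ∀ {a b c : Q.V} (p : Path Q a b) (q : Path Q b c),
    (p.comp q).length = p.length + q.length
  | _, _, _, .nil _, q => (Nat.zero_add _).symm
  | _, _, _, .cons e p, q => by
      simp only [Path.comp, Path.length, Path.length_comp p q]; omega

theorem Path.length_pow {x : Q.V} (c : Path Q x x) : ∀ n, (c.pow n).length = n * c.length
  | 0 => (Nat.zero_mul _).symm
  | n + 1 => by simp only [Path.pow, Path.length_comp, Path.length_pow c n]; ring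

theorem Path.pow_succ {x : Q.V} (c : Path Q x x) (n : ℕ) : c.pow (n + 1) = c.comp (c.pow n) :=
  rfl

theorem lmul_sub {u v : Q.V} (p : Path Q u v) (x y : PAlg k Q) :
    lmul k p (x - y) = lmul k p x - lmul k p y := by
  unfold lmul
  refine Finsupp.sum_sub_index fun s b₁ b₂ => ?_
  split <;> simp only [sub_smul, sub_zero]

theorem lmul_smul {u v : Q.V} (p : Path Q u v) (c : k) (x : PAlg k Q) :
    lmul k p (c • x) = c • lmul k p x := by
  unfold lmul
  rw [Finsupp.sum_smul_index' fun s => by split <;> simp only [zero_smul], Finsupp.smul_sum]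
  refine Finsupp.sum_congr fun s _ => ?_
  split <;> simp only [smul_eq_mul, smul_smul, smul_zero]

theorem lmul_pvec {u v w : Q.V} (p : Path Q u v) (q : Path Q v w) :
    lmul k p (pvec k q) = pvec k (p.comp q) := by
  unfold lmul pvec
  erw [Finsupp.sum_single_index (by split <;> simp only [zero_smul])]
  rw [dif_pos rfl, one_smul]
  rfl

theorem AdmissibleIdeal.pow_comp_sub_mem (J : AdmissibleIdeal k Q) {x y : Q.V}
    (a : Path Q x x) (p : Path Q x y) (c : k)
    (h : pvec k (a.comp p) - c • pvec k p ∈ J.I) (n : ℕ) :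
    pvec k ((a.pow n).comp p) - c ^ n • pvec k p ∈ J.I := by
  induction n with
  | zero => simp [Path.pow, Path.comp]
  | succ n ih =>
    have hshift : pvec k ((a.pow (n + 1)).comp p) - c ^ n • pvec k (a.comp p) ∈ J.I := by
      simpa only [lmul_sub, lmul_pvec, lmul_smul, Path.pow_succ, Path.comp_assoc]
        using J.lmul_mem a ih
    have hsum := J.I.add_mem hshift (J.I.smul_mem (c ^ n) h)
    rwa [smul_sub, smul_smul, ← _root_.pow_succ, sub_add_sub_cancel] at hsum

theorem AdmissibleIdeal.pvec_pow_comp_mem (J : AdmissibleIdeal k Q) {x y : Q.V}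
    {a : Path Q x x} (ha : a.length ≠ 0) (p : Path Q x y) :
    pvec k ((a.pow J.bound).comp p) ∈ J.I := by
  refine J.pow_le _ ?_
  rw [Path.length_comp, Path.length_pow]
  nlinarith [Nat.one_le_iff_ne_zero.mpr ha]

end

theorem stmt5_general {k : Type} [Field k] {Q : FQuiver} (J : AdmissibleIdeal k Q)
    {x y : Q.V} (a : Path Q x x) (ha : a.length ≠ 0)
    (p : Path Q x y) (c : k) (hc : c ≠ 0)
    (hp : pvec k p ∉ J.I) :
    pvec k (a.comp p) - c • pvec k p ∉ J.I := by
  intro hmem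
  have hpow : c ^ J.bound • pvec k p ∈ J.I := by
    simpa using J.I.sub_mem (J.pvec_pow_comp_mem ha p) (J.pow_comp_sub_mem a p c hmem J.bound)
  exact hp ((J.I.smul_mem_iff (pow_ne_zero _ hc)).mp hpow)

/-- in a bound quiver with admissible ideal, there is no binomial
relation of the form `ap - λp` with `a` a nontrivial cycle. -/
theorem stmt5 {k : Type} [Field k] {Q : FQuiver} (J : AdmissibleIdeal k Q)
    {x y : Q.V} (a : Path Q x x) (ha : a.length ≠ 0)
    (p : Path Q x y) (c : k) (hc : c ≠ 0)
    (hu : pvec k (a.comp p) ∉ J.I) (hp : pvec k p ∉ J.I) :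
    pvec k (a.comp p) - c • pvec k p ∉ J.I :=
  stmt5_general J a ha p c hc hp

end FQuiver
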